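/- arXiv:1309.5633 — 2 statements merged into one kernel-verified Lean document; each statement's English description precedes it below -/
import Mathlib

section
/- Let V be a real normed space with norm ‖·‖, let N_H, N_X : V → ℝ be nonnegative functions, and let b : V × V × V → ℝ be trilinear (linear in each argument). Assume: (i) b(u,v,v) = 0 for all u, v ∈ V; (ii) there is a constant C > 0 with |b(u₁,u₂,u₃)| ≤ C · N_X(u₁) · N_X(u₂) · ‖u₃‖ for all u₁,u₂,u₃ ∈ V; (iii) there is a constant C₀ > 0 with N_X(w)² ≤ C₀ · N_H(w) · ‖w‖ for all w ∈ V. Then for every η > 0 there exists a constant C_η > 0 (depending only on η, C, C₀) such that for all u₁, u₂ ∈ V, writing w = u₁ − u₂: |b(u₁,u₁,w) − b(u₂,u₂,w)| ≤ η ‖w‖² + C_η · N_H(w)² · N_X(u₁)⁴. -/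
/-- Young-type polynomial step: if `T² ≤ M·b·a³` then `T ≤ η a² + (M²/(8η³)) b²`. -/
lemma young_step (a b M η T : ℝ) (ha : 0 ≤ a) (hb : 0 ≤ b) (hM : 0 < M)
    (hη : 0 < η) (hT : 0 ≤ T) (h : T ^ 2 ≤ M * b * a ^ 3) :
    T ≤ η * a ^ 2 + M ^ 2 / (8 * η ^ 3) * b ^ 2 := by
  set K : ℝ := M ^ 2 / (8 * η ^ 3) with hK
  have hKpos : 0 < K := by positivity
  set R : ℝ := η * a ^ 2 + K * b ^ 2 with hR
  have hRnn : 0 ≤ R := by positivity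
  have hTR : T ^ 2 ≤ R ^ 2 := by
    have key : 4 * η ^ 2 * M * (b * a ^ 3) ≤ 4 * η ^ 4 * a ^ 4 + M ^ 2 * a ^ 2 * b ^ 2 := by
      nlinarith [sq_nonneg (2 * η ^ 2 * a ^ 2 - M * a * b)]
    have hη2 : (0:ℝ) < 4 * η ^ 2 := by positivity
    have hexp : 4 * η ^ 2 * R ^ 2
        = 4 * η ^ 4 * a ^ 4 + M ^ 2 * a ^ 2 * b ^ 2 + 4 * η ^ 2 * K ^ 2 * b ^ 4 := by
      rw [hR, hK]; field_simp; ring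
    have hKb : (0:ℝ) ≤ 4 * η ^ 2 * K ^ 2 * b ^ 4 := by positivity
    have : 4 * η ^ 2 * T ^ 2 ≤ 4 * η ^ 2 * R ^ 2 := by nlinarith
    exact le_of_mul_le_mul_left this hη2
  nlinarith [sq_nonneg (R - T), sq_nonneg (R + T)]

/-- Abstract local-Lipschitz estimate (2.8) of the paper: if a trilinear form `b` on a normed
space `V` satisfies the cancellation property `b(u,v,v) = 0`, the bound
`|b(u₁,u₂,u₃)| ≤ C N_X(u₁) N_X(u₂) ‖u₃‖` and the interpolation inequality
`N_X(w)² ≤ C₀ N_H(w) ‖w‖`, then for every `η > 0` there is `C_η > 0` such that, with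
`w = u₁ - u₂`, one has `|b(u₁,u₁,w) - b(u₂,u₂,w)| ≤ η ‖w‖² + C_η N_H(w)² N_X(u₁)⁴`. -/
theorem abstract_local_lipschitz {V : Type*} [NormedAddCommGroup V] [NormedSpace ℝ V]
    (NH NX : V → ℝ) (hNH : ∀ v, 0 ≤ NH v) (hNX : ∀ v, 0 ≤ NX v)
    (b : V → V → V → ℝ)
    (hb₁ : ∀ v w : V, IsLinearMap ℝ (fun u => b u v w))
    (hb₂ : ∀ u w : V, IsLinearMap ℝ (fun v => b u v w))
    (hb₃ : ∀ u v : V, IsLinearMap ℝ (fun w => b u v w))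
    (hcancel : ∀ u v : V, b u v v = 0)
    (C : ℝ) (hC : 0 < C)
    (hbound : ∀ u₁ u₂ u₃ : V, |b u₁ u₂ u₃| ≤ C * NX u₁ * NX u₂ * ‖u₃‖)
    (C₀ : ℝ) (hC₀ : 0 < C₀)
    (hinterp : ∀ w : V, NX w ^ 2 ≤ C₀ * NH w * ‖w‖) :
    ∀ η > (0 : ℝ), ∃ Cη > (0 : ℝ), ∀ u₁ u₂ : V,
      |b u₁ u₁ (u₁ - u₂) - b u₂ u₂ (u₁ - u₂)| ≤
        η * ‖u₁ - u₂‖ ^ 2 + Cη * NH (u₁ - u₂) ^ 2 * NX u₁ ^ 4 := by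
  intro η hη
  set M : ℝ := C ^ 2 * C₀ with hM
  have hMpos : 0 < M := by positivity
  refine ⟨M ^ 2 / (8 * η ^ 3), by positivity, fun u₁ u₂ => ?_⟩
  set w : V := u₁ - u₂ with hw
  -- algebraic identity: b u₁ u₁ w - b u₂ u₂ w = b w u₁ w
  have hid : b u₁ u₁ w - b u₂ u₂ w = b w u₁ w := by
    have e1 : w + u₂ = u₁ := by rw [hw]; abel
    have e2 : u₁ - w = u₂ := by rw [hw]; abel
    have h1 : b u₁ u₁ w = b w u₁ w + b u₂ u₁ w := by
      have h := (hb₁ u₁ w).map_add w u₂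
      simpa [e1] using h
    have h2 : b u₂ u₂ w = b u₂ u₁ w - b u₂ w w := by
      have h := (hb₂ u₂ w).map_sub u₁ w
      simpa [e2] using h
    rw [h1, h2, hcancel]; ring
  rw [hid]
  set T : ℝ := |b w u₁ w| with hT
  have hTnn : 0 ≤ T := abs_nonneg _
  have hTb : T ≤ C * NX w * NX u₁ * ‖w‖ := hbound w u₁ w
  have hsq : T ^ 2 ≤ M * (NH w * NX u₁ ^ 2) * ‖w‖ ^ 3 := by
    have h1 : T ^ 2 ≤ (C * NX w * NX u₁ * ‖w‖) ^ 2 :=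
      pow_le_pow_left₀ hTnn hTb 2
    have h2 : NX w ^ 2 ≤ C₀ * NH w * ‖w‖ := hinterp w
    have hnn : (0:ℝ) ≤ C ^ 2 * NX u₁ ^ 2 * ‖w‖ ^ 2 := by positivity
    calc T ^ 2 ≤ (C * NX w * NX u₁ * ‖w‖) ^ 2 := h1
      _ = C ^ 2 * NX u₁ ^ 2 * ‖w‖ ^ 2 * NX w ^ 2 := by ring
      _ ≤ C ^ 2 * NX u₁ ^ 2 * ‖w‖ ^ 2 * (C₀ * NH w * ‖w‖) := by
          exact mul_le_mul_of_nonneg_left h2 hnn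
      _ = M * (NH w * NX u₁ ^ 2) * ‖w‖ ^ 3 := by rw [hM]; ring
  have := young_step ‖w‖ (NH w * NX u₁ ^ 2) M η T (norm_nonneg _)
    (mul_nonneg (hNH w) (sq_nonneg _)) hMpos hη hTnn hsq
  calc T ≤ η * ‖w‖ ^ 2 + M ^ 2 / (8 * η ^ 3) * (NH w * NX u₁ ^ 2) ^ 2 := this
    _ = η * ‖w‖ ^ 2 + M ^ 2 / (8 * η ^ 3) * NH w ^ 2 * NX u₁ ^ 4 := by ring
end

section
/- Let u = (u₁,u₂) : ℝ² → ℝ² be a smooth (infinitely differentiable), compactly supported vector field which is divergence free, i.e. ∂₁u₁ + ∂₂u₂ = 0 everywhere. Then ∫_{ℝ²} Δu(x) · ((u·∇)u)(x) dx = 0, where Δu = (Δu₁, Δu₂) and the dot is the Euclidean inner product in ℝ². -/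
open MeasureTheory

noncomputable section

/-- The plane `ℝ²` as a Euclidean space. -/
abbrev E2 : Type := EuclideanSpace ℝ (Fin 2)

/-- Partial derivative in the `j`-th coordinate direction of a scalar function on `ℝ²`. -/
def pd (j : Fin 2) (f : E2 → ℝ) (x : E2) : ℝ :=
  fderiv ℝ f x (EuclideanSpace.single j 1)

/-- The Laplacian of a scalar function on `ℝ²`. -/
def lap (f : E2 → ℝ) (x : E2) : ℝ :=
  pd 0 (pd 0 f) x + pd 1 (pd 1 f) x

/-- The `i`-th component of the convective term `(u·∇)v`. -/
def conv (u v : E2 → E2) (x : E2) (i : Fin 2) : ℝ :=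
  ∑ j : Fin 2, u x j * pd j (fun y => v y i) x

lemma pd_contDiff {f : E2 → ℝ} (hf : ContDiff ℝ (⊤ : ℕ∞) f) (j : Fin 2) :
    ContDiff ℝ (⊤ : ℕ∞) (pd j f) :=
  (hf.fderiv_right (m := (⊤ : ℕ∞)) (by simp)).clm_apply contDiff_const

lemma pd_hcs {f : E2 → ℝ} (hc : HasCompactSupport f) (j : Fin 2) :
    HasCompactSupport (pd j f) :=
  hc.fderiv_apply ℝ (EuclideanSpace.single j 1)

lemma pd_add {f g : E2 → ℝ} (hf : Differentiable ℝ f) (hg : Differentiable ℝ g)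
    (j : Fin 2) (x : E2) :
    pd j (fun y => f y + g y) x = pd j f x + pd j g x := by
  unfold pd
  rw [fderiv_fun_add (hf x) (hg x)]
  simp

lemma pd_sub {f g : E2 → ℝ} (hf : Differentiable ℝ f) (hg : Differentiable ℝ g)
    (j : Fin 2) (x : E2) :
    pd j (fun y => f y - g y) x = pd j f x - pd j g x := by
  unfold pd
  rw [fderiv_fun_sub (hf x) (hg x)]
  simp

lemma pd_mul {f g : E2 → ℝ} (hf : Differentiable ℝ f) (hg : Differentiable ℝ g)
    (j : Fin 2) (x : E2) :
    pd j (fun y => f y * g y) x = pd j f x * g x + f x * pd j g x := by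
  unfold pd
  rw [fderiv_fun_mul (hf x) (hg x)]
  simp
  ring

lemma pd_neg {f : E2 → ℝ} (j : Fin 2) (x : E2) :
    pd j (fun y => -(f y)) x = -(pd j f x) := by
  unfold pd
  rw [fderiv_fun_neg]
  simp

lemma pd_zero (j : Fin 2) (x : E2) : pd j (fun _ => (0:ℝ)) x = 0 := by
  unfold pd
  simp

lemma hcs_neg {f : E2 → ℝ} (h : HasCompactSupport f) :
    HasCompactSupport (fun y => -(f y)) := by
  exact h.comp_left (g := fun z : ℝ => -z) (by simp)

lemma pd_comm {f : E2 → ℝ} (hf : ContDiff ℝ (⊤ : ℕ∞) f) (x : E2) :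
    pd 0 (pd 1 f) x = pd 1 (pd 0 f) x := by
  have hdf : Differentiable ℝ (fderiv ℝ f) :=
    (hf.fderiv_right (m := (⊤ : ℕ∞)) (by simp)).differentiable (by simp)
  have hcl : ∀ v w : E2, fderiv ℝ (fun y => fderiv ℝ f y w) x v
      = fderiv ℝ (fderiv ℝ f) x v w := by
    intro v w
    rw [fderiv_clm_apply (hdf x) (differentiableAt_const w)]
    simp
  have hsym : ∀ v w : E2, fderiv ℝ (fderiv ℝ f) x v w = fderiv ℝ (fderiv ℝ f) x w v :=
    second_derivative_symmetric (fun y => (hf.differentiable (by simp) y).hasFDerivAt)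
      (hdf x).hasFDerivAt
  calc pd 0 (pd 1 f) x
      = fderiv ℝ (fderiv ℝ f) x (EuclideanSpace.single 0 1) (EuclideanSpace.single 1 1) :=
        hcl _ _
    _ = fderiv ℝ (fderiv ℝ f) x (EuclideanSpace.single 1 1) (EuclideanSpace.single 0 1) :=
        hsym _ _
    _ = pd 1 (pd 0 f) x := (hcl _ _).symm

lemma integral_pd {f : E2 → ℝ} (hf : ContDiff ℝ (⊤ : ℕ∞) f) (hc : HasCompactSupport f) (j : Fin 2) :
    ∫ x, pd j f x = 0 := by
  have h0 : (fun x : E2 => fderiv ℝ (fun _ : E2 => (1:ℝ)) x (EuclideanSpace.single j 1) * f x)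
      = fun _ => 0 := by
    ext x; simp
  have h1 : Integrable (fun x : E2 => pd j f x) :=
    (pd_contDiff hf j).continuous.integrable_of_hasCompactSupport (pd_hcs hc j)
  have h2 : Integrable f := hf.continuous.integrable_of_hasCompactSupport hc
  have h := integral_mul_fderiv_eq_neg_fderiv_mul_of_integrable
    (f := fun _ : E2 => (1:ℝ)) (g := f) (v := EuclideanSpace.single j 1) (μ := volume)
    (by rw [h0]; exact integrable_zero _ _ _)
    (by simpa [pd] using h1)
    (by simpa using h2)
    (fun x _ => differentiableAt_const _) (fun x _ => hf.differentiable (by simp) x)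
  rw [h0] at h
  simpa [pd] using h

/-- Whole-plane analogue of the orthogonality `⟨Au, B(u,u)⟩ = 0` in 2D:
for a smooth, compactly supported, divergence-free vector field `u` on `ℝ²`,
`∫ Δu · (u·∇)u = 0`. -/
theorem laplacian_orthogonal_convective (u : E2 → E2)
    (hu : ContDiff ℝ (⊤ : ℕ∞) u) (hu' : HasCompactSupport u)
    (hdiv : ∀ x : E2, pd 0 (fun y => u y 0) x + pd 1 (fun y => u y 1) x = 0) :
    (∫ x, ∑ i : Fin 2, lap (fun y => u y i) x * conv u u x i) = 0 := by
  classical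
  set a : E2 → ℝ := fun y => u y 0 with ha_def
  set b : E2 → ℝ := fun y => u y 1 with hb_def
  have ha : ContDiff ℝ (⊤ : ℕ∞) a :=
    (EuclideanSpace.proj (0 : Fin 2) : E2 →L[ℝ] ℝ).contDiff.comp hu
  have hb : ContDiff ℝ (⊤ : ℕ∞) b :=
    (EuclideanSpace.proj (1 : Fin 2) : E2 →L[ℝ] ℝ).contDiff.comp hu
  have hca : HasCompactSupport a := hu'.comp_left (g := fun v : E2 => v 0) rfl
  have hcb : HasCompactSupport b := hu'.comp_left (g := fun v : E2 => v 1) rfl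
  have hda : Differentiable ℝ a := ha.differentiable (by simp)
  have hdb : Differentiable ℝ b := hb.differentiable (by simp)
  have hd0a : Differentiable ℝ (pd 0 a) := (pd_contDiff ha 0).differentiable (by simp)
  have hd1a : Differentiable ℝ (pd 1 a) := (pd_contDiff ha 1).differentiable (by simp)
  have hd0b : Differentiable ℝ (pd 0 b) := (pd_contDiff hb 0).differentiable (by simp)
  have hd1b : Differentiable ℝ (pd 1 b) := (pd_contDiff hb 1).differentiable (by simp)
  set S : E2 → ℝ := fun y => pd 0 b y - pd 1 a y with hS_def
  set T : E2 → ℝ := fun y => pd 1 a y * a y + a y * pd 1 a y + (pd 1 b y * b y + b y * pd 1 b y)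
    with hT_def
  set T' : E2 → ℝ := fun y => pd 0 a y * a y + a y * pd 0 a y + (pd 0 b y * b y + b y * pd 0 b y)
    with hT'_def
  set W : E2 → ℝ := fun y => S y * S y with hW_def
  set F0 : E2 → ℝ := fun y => S y * T y + a y * W y with hF0_def
  set F1 : E2 → ℝ := fun y => -(S y * T' y) + b y * W y with hF1_def
  have hSc : ContDiff ℝ (⊤ : ℕ∞) S := (pd_contDiff hb 0).sub (pd_contDiff ha 1)
  have hTc : ContDiff ℝ (⊤ : ℕ∞) T :=
    (((pd_contDiff ha 1).mul ha).add (ha.mul (pd_contDiff ha 1))).add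
      (((pd_contDiff hb 1).mul hb).add (hb.mul (pd_contDiff hb 1)))
  have hT'c : ContDiff ℝ (⊤ : ℕ∞) T' :=
    (((pd_contDiff ha 0).mul ha).add (ha.mul (pd_contDiff ha 0))).add
      (((pd_contDiff hb 0).mul hb).add (hb.mul (pd_contDiff hb 0)))
  have hWc : ContDiff ℝ (⊤ : ℕ∞) W := hSc.mul hSc
  have hF0c : ContDiff ℝ (⊤ : ℕ∞) F0 := (hSc.mul hTc).add (ha.mul hWc)
  have hF1c : ContDiff ℝ (⊤ : ℕ∞) F1 := (hSc.mul hT'c).neg.add (hb.mul hWc)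
  have hSd : Differentiable ℝ S := hSc.differentiable (by simp)
  have hTd : Differentiable ℝ T := hTc.differentiable (by simp)
  have hT'd : Differentiable ℝ T' := hT'c.differentiable (by simp)
  have hWd : Differentiable ℝ W := hWc.differentiable (by simp)
  have hSs : HasCompactSupport S := by
    have h := (pd_hcs hcb 0).add (hcs_neg (pd_hcs hca 1))
    have : (fun y => pd 0 b y - pd 1 a y) = (pd 0 b) + fun y => -(pd 1 a y) := by
      funext y; simp [sub_eq_add_neg]
    rw [hS_def, this]
    exact h
  have hF0s : HasCompactSupport F0 := (hSs.mul_right).add (hca.mul_right)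
  have hF1s : HasCompactSupport F1 := (hcs_neg hSs.mul_right).add (hcb.mul_right)
  -- divergence-free relations
  have hdiv' : ∀ y, pd 0 a y + pd 1 b y = 0 := hdiv
  have hzero : (fun y => pd 0 a y + pd 1 b y) = fun _ => (0:ℝ) := funext hdiv'
  have e2 : ∀ (k : Fin 2) (x : E2), pd k (pd 0 a) x + pd k (pd 1 b) x = 0 := by
    intro k x
    have h := pd_add hd0a hd1b k x
    rw [hzero, pd_zero] at h
    linarith
  -- expansions of the derivatives of S, T, T', W
  have pS : ∀ (j : Fin 2) (x : E2), pd j S x = pd j (pd 0 b) x - pd j (pd 1 a) x := by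
    intro j x
    rw [hS_def]
    exact pd_sub hd0b hd1a j x
  have pT : ∀ (j : Fin 2) (x : E2), pd j T x =
      pd j (pd 1 a) x * a x + pd 1 a x * pd j a x
        + (pd j a x * pd 1 a x + a x * pd j (pd 1 a) x)
        + (pd j (pd 1 b) x * b x + pd 1 b x * pd j b x
        + (pd j b x * pd 1 b x + b x * pd j (pd 1 b) x)) := by
    intro j x
    rw [hT_def]
    erw [pd_add ((hd1a.mul hda).add (hda.mul hd1a)) ((hd1b.mul hdb).add (hdb.mul hd1b)),
      pd_add (hd1a.mul hda) (hda.mul hd1a), pd_add (hd1b.mul hdb) (hdb.mul hd1b),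
      pd_mul hd1a hda, pd_mul hda hd1a, pd_mul hd1b hdb, pd_mul hdb hd1b]
  have pT' : ∀ (j : Fin 2) (x : E2), pd j T' x =
      pd j (pd 0 a) x * a x + pd 0 a x * pd j a x
        + (pd j a x * pd 0 a x + a x * pd j (pd 0 a) x)
        + (pd j (pd 0 b) x * b x + pd 0 b x * pd j b x
        + (pd j b x * pd 0 b x + b x * pd j (pd 0 b) x)) := by
    intro j x
    rw [hT'_def]
    erw [pd_add ((hd0a.mul hda).add (hda.mul hd0a)) ((hd0b.mul hdb).add (hdb.mul hd0b)),
      pd_add (hd0a.mul hda) (hda.mul hd0a), pd_add (hd0b.mul hdb) (hdb.mul hd0b),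
      pd_mul hd0a hda, pd_mul hda hd0a, pd_mul hd0b hdb, pd_mul hdb hd0b]
  have pW : ∀ (j : Fin 2) (x : E2), pd j W x = pd j S x * S x + S x * pd j S x := by
    intro j x
    rw [hW_def]
    exact pd_mul hSd hSd j x
  have hax : ∀ z : E2, u z 0 = a z := fun _ => rfl
  have hbx : ∀ z : E2, u z 1 = b z := fun _ => rfl
  -- key pointwise identity
  have hkey : ∀ x : E2, pd 0 F0 x + pd 1 F1 x
      = 2 * ∑ i : Fin 2, lap (fun y => u y i) x * conv u u x i := by
    intro x
    have sA : pd 0 (pd 1 a) x = pd 1 (pd 0 a) x := pd_comm ha x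
    have e1 : pd 1 b x = -pd 0 a x := by linarith [hdiv' x]
    have e20 : pd 0 (pd 1 b) x = -(pd 0 (pd 0 a) x) := by linarith [e2 0 x]
    have e21 : pd 1 (pd 1 b) x = -(pd 1 (pd 0 a) x) := by linarith [e2 1 x]
    have e3 : pd 1 (pd 0 b) x = -(pd 0 (pd 0 a) x) := by
      rw [← pd_comm hb x]; exact e20
    rw [hF0_def, hF1_def]
    erw [pd_add (hSd.mul hTd) (hda.mul hWd) 0 x,
      pd_add ((hSd.mul hT'd).neg) (hdb.mul hWd) 1 x,
      pd_mul hSd hTd 0 x, pd_mul hda hWd 0 x,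
      pd_neg (f := fun y => S y * T' y) 1 x,
      pd_mul hSd hT'd 1 x, pd_mul hdb hWd 1 x]
    simp only [pS, pT, pT', pW]
    simp only [lap, conv, Fin.sum_univ_two, hax, hbx]
    simp only [hS_def, hT_def, hT'_def, hW_def]
    rw [e20, e21, e3, sA, e1]
    ring
  -- conclude by integrating
  have i0 : Integrable (fun x : E2 => pd 0 F0 x) :=
    (pd_contDiff hF0c 0).continuous.integrable_of_hasCompactSupport (pd_hcs hF0s 0)
  have i1 : Integrable (fun x : E2 => pd 1 F1 x) :=
    (pd_contDiff hF1c 1).continuous.integrable_of_hasCompactSupport (pd_hcs hF1s 1)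
  have h2 : (∫ x, (2:ℝ) * ∑ i : Fin 2, lap (fun y => u y i) x * conv u u x i) = 0 := by
    have hfe : (fun x => (2:ℝ) * ∑ i : Fin 2, lap (fun y => u y i) x * conv u u x i)
        = fun x => pd 0 F0 x + pd 1 F1 x := funext fun x => (hkey x).symm
    rw [hfe, integral_add i0 i1, integral_pd hF0c hF0s 0, integral_pd hF1c hF1s 1]
    ring
  rw [integral_const_mul] at h2
  linarith
end
end
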